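/- (Stieltjes transform of the Marčenko–Pastur law on the negative real axis.) Fix y > 0 and set a = (1−√y)², b = (1+√y)². Let F_y be the Marčenko–Pastur distribution with parameter y, i.e., the probability measure on ℝ with density f_y(x) = (2π x y)⁻¹ √((b−x)(x−a)) on [a,b] and, when y > 1, an additional point mass of weight 1 − 1/y at 0. Then for every σ > 0, ∫ (x+σ)⁻¹ dF_y(x) = m(σ), where m(σ) = −(1+σ−y−√((1+y+σ)²−4y))/(2yσ). -/

import Mathlib

/-!
Substituting `x = 1 + y + 2√y sin θ`, `θ ∈ [-π/2, π/2]`, turns `√((b - x)(x - a)) dx` into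
`(2√y cos θ)² dθ`, and partial fractions in `1 / (x (x + σ))` reduce the absolutely continuous part
to the elementary integrals `∫ cos² θ / (p + q sin θ) dθ = π (p - √(p² - q²)) / q²` at
`p = 1 + y` and `p = 1 + y + σ`, `q = 2√y`, themselves computed by the Weierstrass substitution.
At `p = 1 + y` the root is `|1 - y|`; for `y > 1` the atom at `0`, of mass `1 - 1/y`, contributes
`(1 - 1/y) / σ`, which is exactly what turns `|1 - y|` back into `1 - y` in the final formula.
-/

open MeasureTheory Real

/-- The Marčenko–Pastur distribution with parameter `y > 0`: density
`(2πxy)⁻¹ √((b−x)(x−a))` on `[a,b]` with `a = (1−√y)²`, `b = (1+√y)²`,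
plus a point mass of weight `1 − 1/y` at `0` when `y > 1`. -/
noncomputable def mpLaw (y : ℝ) : Measure ℝ :=
  (ENNReal.ofReal (1 - 1/y)) • Measure.dirac 0 +
    (volume.restrict (Set.Icc ((1 - Real.sqrt y)^2) ((1 + Real.sqrt y)^2))).withDensity
      (fun x => ENNReal.ofReal
        (Real.sqrt (((1 + Real.sqrt y)^2 - x) * (x - (1 - Real.sqrt y)^2))
          / (2 * Real.pi * x * y)))

open Set

lemma add_mul_sin_pos {p q : ℝ} (h : |q| < p) (θ : ℝ) : 0 < p + q * sin θ := by
  have : |q * sin θ| ≤ |q| := by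
    rw [abs_mul]; exact mul_le_of_le_one_right (abs_nonneg q) (abs_sin_le_one θ)
  linarith [neg_abs_le (q * sin θ)]

lemma sq_sub_sq_pos_of_abs_lt {p q : ℝ} (h : |q| < p) : 0 < p ^ 2 - q ^ 2 := by
  nlinarith [abs_nonneg q, sq_abs q]

/-- Found by the Weierstrass substitution `t = tan (θ / 2)`. -/
lemma hasDerivAt_arctan_tan_half {p q θ : ℝ} (h : |q| < p) (hθ : cos (θ / 2) ≠ 0) :
    HasDerivAt (fun θ => 2 / √(p ^ 2 - q ^ 2) * arctan ((p * tan (θ / 2) + q) / √(p ^ 2 - q ^ 2)))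
      (p + q * sin θ)⁻¹ θ := by
  set D := √(p ^ 2 - q ^ 2)
  have hD2 : D ^ 2 = p ^ 2 - q ^ 2 := sq_sqrt (sq_sub_sq_pos_of_abs_lt h).le
  have hD : D ≠ 0 := (sqrt_pos.2 (sq_sub_sq_pos_of_abs_lt h)).ne'
  have htan : HasDerivAt (fun θ => tan (θ / 2)) (1 / cos (θ / 2) ^ 2 * (1 / 2)) θ := by
    simpa [Function.comp_def] using (hasDerivAt_tan hθ).comp θ ((hasDerivAt_id θ).div_const 2)
  refine (((hasDerivAt_arctan _).comp θ (((htan.const_mul p).add_const q).div_const D)).const_mul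
    (2 / D)).congr_deriv ?_
  have hsin : sin θ = 2 * sin (θ / 2) * cos (θ / 2) := by
    rw [← sin_two_mul, mul_div_cancel₀ θ two_ne_zero]
  have hne : p + q * (2 * sin (θ / 2) * cos (θ / 2)) ≠ 0 := hsin ▸ (add_mul_sin_pos h θ).ne'
  rw [tan_eq_sin_div_cos, hsin]
  field_simp
  rw [eq_div_iff (by convert hne using 1; ring)]
  linear_combination -cos (θ / 2) ^ 2 * hD2 - p ^ 2 * sin_sq_add_cos_sq (θ / 2)

theorem integral_inv_add_mul_sin {p q : ℝ} (h : |q| < p) :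
    ∫ θ in -(π / 2)..π / 2, (p + q * sin θ)⁻¹ = π / √(p ^ 2 - q ^ 2) := by
  set D := √(p ^ 2 - q ^ 2)
  have hD : 0 < D := sqrt_pos.2 (sq_sub_sq_pos_of_abs_lt h)
  have hpq : 0 < p + q := by linarith [neg_abs_le q]
  have hderiv : ∀ θ ∈ uIcc (-(π / 2)) (π / 2), HasDerivAt
      (fun θ => 2 / D * arctan ((p * tan (θ / 2) + q) / D)) (p + q * sin θ)⁻¹ θ := by
    intro θ hθ
    rw [uIcc_of_le (by linarith [pi_pos])] at hθ
    refine hasDerivAt_arctan_tan_half h (cos_pos_of_mem_Ioo ⟨?_, ?_⟩).ne'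
      <;> linarith [hθ.1, hθ.2, pi_pos]
  have hcont : Continuous fun θ => (p + q * sin θ)⁻¹ :=
    (continuous_const.add (continuous_const.mul continuous_sin)).inv₀
      fun θ => (add_mul_sin_pos h θ).ne'
  -- `arctan x + arctan x⁻¹ = π / 2` with `x = (p + q) / D`, since `(p + q) (p - q) = D²`
  have hinv : ((p + q) / D)⁻¹ = (p - q) / D := by
    rw [inv_div, div_eq_div_iff (by positivity) hD.ne', ← sq,
      sq_sqrt (sq_sub_sq_pos_of_abs_lt h).le]
    ring
  have harctan := arctan_inv_of_pos (div_pos hpq hD)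
  rw [hinv] at harctan
  rw [intervalIntegral.integral_eq_sub_of_hasDerivAt hderiv (hcont.intervalIntegrable _ _), neg_div,
    tan_neg, div_div, show π / (2 * 2) = π / 4 by ring, tan_pi_div_four,
    show (p * -1 + q) / D = -((p - q) / D) by ring, arctan_neg, mul_one, harctan]
  field_simp
  ring

lemma neg_one_lt_sin_of_mem_Ioo {θ : ℝ} (hθ : θ ∈ Ioo (-(π / 2)) (π / 2)) : -1 < sin θ := by
  simpa using strictMonoOn_sin ⟨le_rfl, by linarith [pi_pos]⟩ ⟨hθ.1.le, hθ.2.le⟩ hθ.1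

lemma norm_cos_sq_div_add_mul_sin_le {p q : ℝ} (hq : 0 < q) (hqp : q ≤ p) (θ : ℝ) :
    ‖cos θ ^ 2 / (p + q * sin θ)‖ ≤ 2 / q := by
  have hcos : cos θ ^ 2 = (1 - sin θ) * (1 + sin θ) := by linear_combination sin_sq_add_cos_sq θ
  rcases (neg_one_le_sin θ).eq_or_lt with hs | hs
  · simp only [hcos, ← hs, sub_neg_eq_add, add_neg_cancel, mul_zero, zero_div, norm_zero]
    positivity
  have hA : 0 < p + q * sin θ := by nlinarith
  rw [norm_of_nonneg (by positivity), div_le_div_iff₀ hA hq, hcos]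
  nlinarith [sin_le_one θ]

lemma intervalIntegrable_cos_sq_div_add_mul_sin {p q : ℝ} (hq : 0 < q) (hqp : q ≤ p) (a b : ℝ) :
    IntervalIntegrable (fun θ => cos θ ^ 2 / (p + q * sin θ)) volume a b :=
  intervalIntegrable_const.mono_fun' (Measurable.aestronglyMeasurable (by fun_prop))
    (ae_of_all _ (norm_cos_sq_div_add_mul_sin_le hq hqp))

theorem integral_cos_sq_div_add_mul_sin {p q : ℝ} (hq : 0 < q) (hqp : q ≤ p) :
    ∫ θ in -(π / 2)..π / 2, cos θ ^ 2 / (p + q * sin θ) = π / q ^ 2 * (p - √(p ^ 2 - q ^ 2)) := by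
  have hle : -(π / 2) ≤ π / 2 := by linarith [pi_pos]
  have hdecomp : EqOn (fun θ => cos θ ^ 2 / (p + q * sin θ))
      (fun θ => (p - q * sin θ) / q ^ 2 - (p ^ 2 - q ^ 2) / q ^ 2 * (p + q * sin θ)⁻¹)
      (uIoo (-(π / 2)) (π / 2)) := by
    intro θ hθ
    rw [uIoo_of_le hle] at hθ
    have hA : 0 < p + q * sin θ := by nlinarith [neg_one_lt_sin_of_mem_Ioo hθ]
    field_simp
    linear_combination q ^ 2 * sin_sq_add_cos_sq θ
  have hlinInt : IntervalIntegrable (fun θ => (p - q * sin θ) / q ^ 2) volume (-(π / 2)) (π / 2) :=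
    (by fun_prop : Continuous fun θ => (p - q * sin θ) / q ^ 2).intervalIntegrable _ _
  have hlin : ∫ θ in -(π / 2)..π / 2, (p - q * sin θ) / q ^ 2 = π * p / q ^ 2 := by
    rw [intervalIntegral.integral_div, intervalIntegral.integral_sub intervalIntegrable_const
      (continuous_sin.intervalIntegrable _ _ |>.const_mul q), intervalIntegral.integral_const_mul,
      integral_sin, cos_neg]
    simp only [intervalIntegral.integral_const, smul_eq_mul]
    ring
  rw [intervalIntegral.integral_congr_uIoo hdecomp]
  rcases hqp.eq_or_lt with rfl | hlt
  · simp only [sub_self, zero_div, zero_mul, sub_zero, hlin, sqrt_zero]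
    ring
  have habs : |q| < p := (abs_of_pos hq).symm ▸ hlt
  have hinvInt : IntervalIntegrable (fun θ => (p ^ 2 - q ^ 2) / q ^ 2 * (p + q * sin θ)⁻¹)
      volume (-(π / 2)) (π / 2) :=
    (continuous_const.mul ((by fun_prop : Continuous fun θ => p + q * sin θ).inv₀
      fun θ => (add_mul_sin_pos habs θ).ne')).intervalIntegrable _ _
  rw [intervalIntegral.integral_sub hlinInt hinvInt, hlin, intervalIntegral.integral_const_mul,
    integral_inv_add_mul_sin habs]
  field_simp
  rw [div_sqrt]

section SineSubstitution

variable {E : Type*} [NormedAddCommGroup E] [NormedSpace ℝ E] (m : ℝ) {r : ℝ}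

lemma image_add_mul_sin_Icc (hr : 0 < r) :
    (fun θ => m + r * sin θ) '' Icc (-(π / 2)) (π / 2) = Icc (m - r) (m + r) := by
  have : (fun θ => m + r * sin θ) = (r * · + m) ∘ sin := by ext; simp [add_comm]
  rw [this, image_comp, bijOn_sin.image_eq, image_affine_Icc' hr]
  congr 1 <;> ring

lemma injOn_add_mul_sin (hr : r ≠ 0) :
    InjOn (fun θ => m + r * sin θ) (Icc (-(π / 2)) (π / 2)) :=
  fun _ ha _ hb h => injOn_sin ha hb (by simpa [hr] using h)

lemma abs_mul_cos_of_mem_Icc (hr : 0 ≤ r) {θ : ℝ} (hθ : θ ∈ Icc (-(π / 2)) (π / 2)) :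
    |r * cos θ| = r * cos θ :=
  abs_of_nonneg (mul_nonneg hr (cos_nonneg_of_mem_Icc hθ))

lemma hasDerivWithinAt_add_mul_sin (s : Set ℝ) (θ : ℝ) :
    HasDerivWithinAt (fun θ => m + r * sin θ) (r * cos θ) s θ :=
  (((hasDerivAt_sin θ).const_mul r).const_add m).hasDerivWithinAt

theorem integral_Icc_eq_integral_add_mul_sin (hr : 0 < r) (g : ℝ → E) :
    ∫ x in Icc (m - r) (m + r), g x = ∫ θ in -(π / 2)..π / 2, (r * cos θ) • g (m + r * sin θ) := by
  rw [← image_add_mul_sin_Icc m hr, integral_image_eq_integral_abs_deriv_smul measurableSet_Icc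
    (fun θ _ => hasDerivWithinAt_add_mul_sin m _ θ) (injOn_add_mul_sin m hr.ne'),
    intervalIntegral.integral_of_le (by linarith [pi_pos]), ← integral_Icc_eq_integral_Ioc]
  exact setIntegral_congr_fun measurableSet_Icc fun θ hθ => by
    rw [abs_mul_cos_of_mem_Icc hr.le hθ]

theorem integrableOn_Icc_iff_intervalIntegrable_add_mul_sin (hr : 0 < r) (g : ℝ → E) :
    IntegrableOn g (Icc (m - r) (m + r)) ↔
      IntervalIntegrable (fun θ => (r * cos θ) • g (m + r * sin θ)) volume (-(π / 2)) (π / 2) := by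
  rw [← image_add_mul_sin_Icc m hr, integrableOn_image_iff_integrableOn_abs_deriv_smul
    measurableSet_Icc (fun θ _ => hasDerivWithinAt_add_mul_sin m _ θ) (injOn_add_mul_sin m hr.ne'),
    intervalIntegrable_iff_integrableOn_Icc_of_le (by linarith [pi_pos])]
  exact integrableOn_congr_fun (fun θ hθ => by rw [abs_mul_cos_of_mem_Icc hr.le hθ])
    measurableSet_Icc

end SineSubstitution

section WithDensityOfReal

variable {α E : Type*} [MeasurableSpace α] [NormedAddCommGroup E] [NormedSpace ℝ E]
  {μ : Measure α} {d : α → ℝ}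

lemma integrable_withDensity_ofReal_iff (hd : Measurable d) (hd0 : ∀ᵐ x ∂μ, 0 ≤ d x) {g : α → E} :
    Integrable g (μ.withDensity fun x => ENNReal.ofReal (d x)) ↔
      Integrable (fun x => d x • g x) μ := by
  rw [integrable_withDensity_iff_integrable_smul' hd.ennreal_ofReal
    (ae_of_all _ fun _ => ENNReal.ofReal_lt_top)]
  exact integrable_congr (hd0.mono fun x hx => by simp only [ENNReal.toReal_ofReal hx])

lemma integral_withDensity_ofReal (hd : Measurable d) (hd0 : ∀ᵐ x ∂μ, 0 ≤ d x) (g : α → E) :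
    ∫ x, g x ∂(μ.withDensity fun x => ENNReal.ofReal (d x)) = ∫ x, d x • g x ∂μ := by
  rw [integral_withDensity_eq_integral_toReal_smul hd.ennreal_ofReal
    (ae_of_all _ fun _ => ENNReal.ofReal_lt_top)]
  exact integral_congr_ae (hd0.mono fun x hx => by simp only [ENNReal.toReal_ofReal hx])

end WithDensityOfReal

noncomputable def mpDensity (y x : ℝ) : ℝ :=
  √(((1 + √y) ^ 2 - x) * (x - (1 - √y) ^ 2)) / (2 * π * x * y)

lemma measurable_mpDensity (y : ℝ) : Measurable (mpDensity y) := by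
  unfold mpDensity; fun_prop

lemma mpDensity_nonneg {y x : ℝ} (hy : 0 ≤ y) (hx : 0 ≤ x) : 0 ≤ mpDensity y x :=
  div_nonneg (sqrt_nonneg _) (by positivity)

lemma two_sqrt_le_one_add {y : ℝ} (hy : 0 ≤ y) : 2 * √y ≤ 1 + y := by
  nlinarith [sq_nonneg (1 - √y), sq_sqrt hy]

lemma mpDensity_mul_inv_add_sin_subst {y σ : ℝ} (hy : 0 < y) (hσ : 0 < σ) :
    EqOn (fun θ => (2 * √y * cos θ) •
        (mpDensity y (1 + y + 2 * √y * sin θ) * (1 + y + 2 * √y * sin θ + σ)⁻¹))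
      (fun θ => 2 / (π * σ) *
        (cos θ ^ 2 / (1 + y + 2 * √y * sin θ) - cos θ ^ 2 / (1 + y + σ + 2 * √y * sin θ)))
      (uIoo (-(π / 2)) (π / 2)) := by
  intro θ hθ
  rw [uIoo_of_le (by linarith [pi_pos])] at hθ
  obtain ⟨s, hs, rfl⟩ : ∃ s > 0, y = s ^ 2 := ⟨√y, sqrt_pos.2 hy, (sq_sqrt hy.le).symm⟩
  have hsin := neg_one_lt_sin_of_mem_Ioo hθ
  have hcos := cos_pos_of_mem_Ioo hθ
  have hφ : 0 < 1 + s ^ 2 + 2 * s * sin θ := by nlinarith [sq_nonneg (1 - s)]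
  have hroot : √(((1 + s) ^ 2 - (1 + s ^ 2 + 2 * s * sin θ)) *
      (1 + s ^ 2 + 2 * s * sin θ - (1 - s) ^ 2)) = 2 * s * cos θ := by
    rw [← sqrt_sq (by positivity : 0 ≤ 2 * s * cos θ)]
    congr 1
    linear_combination (-4 * s ^ 2) * sin_sq_add_cos_sq θ
  have hψ : 0 < 1 + s ^ 2 + σ + 2 * s * sin θ := by linarith
  simp only [smul_eq_mul, mpDensity, sqrt_sq hs.le, hroot,
    show 1 + s ^ 2 + 2 * s * sin θ + σ = 1 + s ^ 2 + σ + 2 * s * sin θ by ring]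
  field_simp
  ring

lemma integrableOn_mpDensity_mul_inv_add {y σ : ℝ} (hy : 0 < y) (hσ : 0 < σ) :
    IntegrableOn (fun x => mpDensity y x * (x + σ)⁻¹) (Icc (1 + y - 2 * √y) (1 + y + 2 * √y)) := by
  have hr : 0 < 2 * √y := by positivity
  rw [integrableOn_Icc_iff_intervalIntegrable_add_mul_sin _ hr]
  refine IntervalIntegrable.congr_uIoo ?_ (mpDensity_mul_inv_add_sin_subst hy hσ).symm
  exact ((intervalIntegrable_cos_sq_div_add_mul_sin hr (two_sqrt_le_one_add hy.le) _ _).sub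
    (intervalIntegrable_cos_sq_div_add_mul_sin hr
      ((two_sqrt_le_one_add hy.le).trans (by linarith)) _ _)).const_mul _

theorem integral_mpDensity_mul_inv_add {y σ : ℝ} (hy : 0 < y) (hσ : 0 < σ) :
    ∫ x in Icc (1 + y - 2 * √y) (1 + y + 2 * √y), mpDensity y x * (x + σ)⁻¹
      = (√((1 + y + σ) ^ 2 - 4 * y) - σ - |1 - y|) / (2 * y * σ) := by
  have hr : 0 < 2 * √y := by positivity
  have h₁ := two_sqrt_le_one_add hy.le
  have h₂ : 2 * √y ≤ 1 + y + σ := h₁.trans (by linarith)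
  rw [integral_Icc_eq_integral_add_mul_sin _ hr, intervalIntegral.integral_congr_uIoo
    (mpDensity_mul_inv_add_sin_subst hy hσ), intervalIntegral.integral_const_mul,
    intervalIntegral.integral_sub (intervalIntegrable_cos_sq_div_add_mul_sin hr h₁ _ _)
      (intervalIntegrable_cos_sq_div_add_mul_sin hr h₂ _ _),
    integral_cos_sq_div_add_mul_sin hr h₁, integral_cos_sq_div_add_mul_sin hr h₂, mul_pow,
    sq_sqrt hy.le, show (1 + y) ^ 2 - 2 ^ 2 * y = (1 - y) ^ 2 by ring, sqrt_sq_eq_abs,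
    show (1 + y + σ) ^ 2 - 2 ^ 2 * y = (1 + y + σ) ^ 2 - 4 * y by ring]
  field_simp
  ring

lemma mpLaw_eq_add_withDensity {y : ℝ} (hy : 0 ≤ y) :
    mpLaw y = ENNReal.ofReal (1 - 1 / y) • Measure.dirac 0 +
      (volume.restrict (Icc (1 + y - 2 * √y) (1 + y + 2 * √y))).withDensity
        fun x => ENNReal.ofReal (mpDensity y x) := by
  rw [show 1 + y - 2 * √y = (1 - √y) ^ 2 by linear_combination -sq_sqrt hy,
    show 1 + y + 2 * √y = (1 + √y) ^ 2 by linear_combination -sq_sqrt hy]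
  rfl

/-- Stieltjes transform of the Marčenko–Pastur law on the negative real axis:
`∫ (x+σ)⁻¹ dF_y(x) = m(σ)` for all `σ > 0`. -/
theorem mp_stieltjes_transform (y : ℝ) (hy : 0 < y) (σ : ℝ) (hσ : 0 < σ) :
    ∫ x, (x + σ)⁻¹ ∂(mpLaw y)
      = -((1 + σ - y - Real.sqrt ((1 + y + σ)^2 - 4*y)) / (2*y*σ)) := by
  have hdens0 : ∀ᵐ x ∂(volume.restrict (Icc (1 + y - 2 * √y) (1 + y + 2 * √y))),
      0 ≤ mpDensity y x :=
    ae_restrict_of_forall_mem measurableSet_Icc fun x hx =>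
      mpDensity_nonneg hy.le (le_trans (by linarith [two_sqrt_le_one_add hy.le]) hx.1)
  have hatom : Integrable (fun x : ℝ => (x + σ)⁻¹) (ENNReal.ofReal (1 - 1 / y) • Measure.dirac 0) :=
    (integrable_dirac (by simp)).smul_measure ENNReal.ofReal_ne_top
  have hcont := (integrable_withDensity_ofReal_iff (measurable_mpDensity y) hdens0).2
    (integrableOn_mpDensity_mul_inv_add hy hσ)
  rw [mpLaw_eq_add_withDensity hy.le, integral_add_measure hatom hcont, integral_smul_measure,
    integral_dirac, integral_withDensity_ofReal (measurable_mpDensity y) hdens0]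
  simp only [smul_eq_mul, ENNReal.toReal_ofReal', zero_add]
  rw [integral_mpDensity_mul_inv_add hy hσ]
  rcases le_or_gt y 1 with hy1 | hy1
  · rw [max_eq_right (by rw [sub_nonpos, le_div_iff₀ hy]; linarith), abs_of_nonneg (by linarith)]
    field_simp
    ring
  · rw [max_eq_left (by rw [sub_nonneg, div_le_one hy]; linarith), abs_of_neg (by linarith)]
    field_simp
    ring
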